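/- Let 1 ≤ p ≤ r and let {u_n} ⊂ L^r(ℝ^N) be a bounded sequence such that u_n(x) → u_0(x) for a.e. x ∈ ℝ^N. Then ∫_{ℝ^N} | |u_n|^p − |u_n − u_0|^p − |u_0|^p |^{r/p} dx → 0 as n → ∞. -/

import Mathlib

/-!
Convexity of `t ↦ t ^ p` gives `||a| ^ p - |a - b| ^ p| ≤ p (|a - b| + |b|) ^ (p - 1) |b|`, and
splitting according to whether `|b|` is small compared with `|a - b|` turns this into the
pointwise bound `| |a| ^ p - |a - b| ^ p - |b| ^ p | ^ (r / p) ≤ ε |a - b| ^ r + C_ε |b| ^ r`.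
With `a = u_n`, `b = u₀` the integrand is thus at most `ε |u_n - u₀| ^ r` plus an integrable
function independent of `n`. By Fatou `u₀ ∈ L^r`, so `∫ |u_n - u₀| ^ r` stays bounded, and
dominated convergence applied to the positive part of the integrand minus `ε |u_n - u₀| ^ r`
shows that the integrals are eventually `O(ε)`.
-/

open MeasureTheory Real Filter Topology

theorem rpow_sub_rpow_le_mul_rpow_sub_one {p x y : ℝ} (hp : 1 ≤ p) (hy : 0 ≤ y) (hyx : y ≤ x) :
    x ^ p - y ^ p ≤ p * x ^ (p - 1) * (x - y) := by
  rcases hyx.eq_or_lt with rfl | hyx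
  · simp
  have hslope := (convexOn_rpow hp).slope_le_of_hasDerivAt (Set.mem_Ici.2 hy)
    (Set.mem_Ici.2 (hy.trans hyx.le)) hyx (hasDerivAt_rpow_const (Or.inr hp))
  rwa [slope_def_field, div_le_iff₀ (sub_pos.2 hyx)] at hslope

theorem abs_rpow_sub_rpow_le {p x y : ℝ} (hp : 1 ≤ p) (hx : 0 ≤ x) (hy : 0 ≤ y) :
    |x ^ p - y ^ p| ≤ p * max x y ^ (p - 1) * |x - y| := by
  wlog hyx : y ≤ x generalizing x y
  · rw [abs_sub_comm, max_comm, abs_sub_comm x]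
    exact this hy hx (le_of_not_ge hyx)
  have hmono : y ^ p ≤ x ^ p := rpow_le_rpow hy hyx (by linarith)
  rw [abs_of_nonneg (sub_nonneg.2 hmono), abs_of_nonneg (sub_nonneg.2 hyx), max_eq_left hyx]
  exact rpow_sub_rpow_le_mul_rpow_sub_one hp hy hyx

theorem rpow_sub_one_mul_self {p x : ℝ} (hp : 1 ≤ p) (hx : 0 ≤ x) : x ^ (p - 1) * x = x ^ p := by
  rw [← rpow_add_one' hx (by linarith), sub_add_cancel]

theorem exists_add_rpow_sub_one_mul_le {p δ : ℝ} (hp : 1 ≤ p) (hδ : 0 < δ) :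
    ∃ C ≥ 0, ∀ x y : ℝ, 0 ≤ x → 0 ≤ y → (x + y) ^ (p - 1) * y ≤ δ * x ^ p + C * y ^ p := by
  set η := min 1 (δ / 2 ^ (p - 1))
  have hη : 0 < η := lt_min one_pos (by positivity)
  refine ⟨(η⁻¹ + 1) ^ (p - 1), by positivity, fun x y hx hy => ?_⟩
  rcases le_total y (η * x) with hyx | hxy
  · have hsum : x + y ≤ 2 * x := by nlinarith [min_le_left 1 (δ / 2 ^ (p - 1))]
    calc (x + y) ^ (p - 1) * y ≤ (2 * x) ^ (p - 1) * (η * x) := by gcongr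
      _ = 2 ^ (p - 1) * η * x ^ p := by
        rw [mul_rpow zero_le_two hx, ← rpow_sub_one_mul_self hp hx]; ring
      _ ≤ δ * x ^ p := by
        gcongr
        rw [← le_div_iff₀' (by positivity)]
        exact min_le_right _ _
      _ ≤ δ * x ^ p + (η⁻¹ + 1) ^ (p - 1) * y ^ p := le_add_of_nonneg_right (by positivity)
  · have hsum : x + y ≤ (η⁻¹ + 1) * y := by
      have : x ≤ η⁻¹ * y := by rw [inv_mul_eq_div, le_div_iff₀' hη]; exact hxy
      linarith
    calc (x + y) ^ (p - 1) * y ≤ ((η⁻¹ + 1) * y) ^ (p - 1) * y := by gcongr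
      _ = (η⁻¹ + 1) ^ (p - 1) * y ^ p := by
        rw [mul_rpow (by positivity) hy, mul_assoc, rpow_sub_one_mul_self hp hy]
      _ ≤ δ * x ^ p + (η⁻¹ + 1) ^ (p - 1) * y ^ p := le_add_of_nonneg_left (by positivity)

theorem exists_abs_rpow_sub_rpow_sub_rpow_le {p δ : ℝ} (hp : 1 ≤ p) (hδ : 0 < δ) :
    ∃ C ≥ 0, ∀ a b : ℝ, |(|a| ^ p - |a - b| ^ p - |b| ^ p)| ≤ δ * |a - b| ^ p + C * |b| ^ p := by
  have hp0 : 0 < p := by linarith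
  obtain ⟨C, hC0, hC⟩ := exists_add_rpow_sub_one_mul_le hp (div_pos hδ hp0)
  refine ⟨p * C + 1, by positivity, fun a b => ?_⟩
  have hmax : max |a| |a - b| ≤ |a - b| + |b| :=
    max_le (by simpa using abs_add_le (a - b) b) (le_add_of_nonneg_right (abs_nonneg b))
  have hdiff : |(|a| - |a - b|)| ≤ |b| := by simpa using abs_abs_sub_abs_le_abs_sub a (a - b)
  calc |(|a| ^ p - |a - b| ^ p - |b| ^ p)| ≤ |(|a| ^ p - |a - b| ^ p)| + |b| ^ p := by
        simpa only [abs_of_nonneg (rpow_nonneg (abs_nonneg b) p)] using abs_sub _ (|b| ^ p)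
    _ ≤ p * max |a| |a - b| ^ (p - 1) * |(|a| - |a - b|)| + |b| ^ p := by
        gcongr
        exact abs_rpow_sub_rpow_le hp (abs_nonneg a) (abs_nonneg _)
    _ ≤ p * ((|a - b| + |b|) ^ (p - 1) * |b|) + |b| ^ p := by
        rw [mul_assoc]; gcongr
    _ ≤ p * (δ / p * |a - b| ^ p + C * |b| ^ p) + |b| ^ p := by
        gcongr; exact hC _ _ (abs_nonneg _) (abs_nonneg _)
    _ = δ * |a - b| ^ p + (p * C + 1) * |b| ^ p := by field_simp; ring

theorem add_rpow_le_two_rpow_sub_one_mul {p x y : ℝ} (hp : 1 ≤ p) (hx : 0 ≤ x) (hy : 0 ≤ y) :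
    (x + y) ^ p ≤ 2 ^ (p - 1) * (x ^ p + y ^ p) := by
  lift x to NNReal using hx
  lift y to NNReal using hy
  exact_mod_cast NNReal.rpow_add_le_mul_rpow_add_rpow x y hp

theorem exists_abs_rpow_sub_rpow_sub_rpow_rpow_div_le {p r ε : ℝ} (hp : 1 ≤ p) (hpr : p ≤ r)
    (hε : 0 < ε) : ∃ C, ∀ a b : ℝ,
      |(|a| ^ p - |a - b| ^ p - |b| ^ p)| ^ (r / p) ≤ ε * |a - b| ^ r + C * |b| ^ r := by
  have hp0 : 0 < p := by linarith
  set q := r / p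
  have hq : 1 ≤ q := (one_le_div hp0).2 hpr
  have hpow : ∀ x : ℝ, (|x| ^ p) ^ q = |x| ^ r := fun x => by
    rw [← rpow_mul (abs_nonneg x), mul_div_cancel₀ _ hp0.ne']
  set δ := (ε / 2 ^ (q - 1)) ^ q⁻¹
  have hδq : 2 ^ (q - 1) * δ ^ q = ε := by
    rw [rpow_inv_rpow (by positivity) (by linarith), mul_div_cancel₀ _ (by positivity)]
  obtain ⟨C, hC0, hC⟩ := exists_abs_rpow_sub_rpow_sub_rpow_le hp (show 0 < δ by positivity)
  refine ⟨2 ^ (q - 1) * C ^ q, fun a b => ?_⟩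
  calc |(|a| ^ p - |a - b| ^ p - |b| ^ p)| ^ q ≤ (δ * |a - b| ^ p + C * |b| ^ p) ^ q := by
        gcongr; exact hC a b
    _ ≤ 2 ^ (q - 1) * ((δ * |a - b| ^ p) ^ q + (C * |b| ^ p) ^ q) :=
        add_rpow_le_two_rpow_sub_one_mul hq (by positivity) (by positivity)
    _ = ε * |a - b| ^ r + 2 ^ (q - 1) * C ^ q * |b| ^ r := by
        rw [mul_rpow (by positivity) (by positivity), mul_rpow hC0 (by positivity), hpow, hpow,
          ← hδq]
        ring

theorem continuous_abs_rpow_sub_rpow_sub_rpow {p q : ℝ} (hp : 0 ≤ p) (hq : 0 ≤ q) :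
    Continuous fun z : ℝ × ℝ => |(|z.1| ^ p - |z.1 - z.2| ^ p - |z.2| ^ p)| ^ q := by
  fun_prop (disch := assumption)

theorem tendsto_abs_rpow_sub_rpow_sub_rpow_zero {ι : Type*} {l : Filter ι} {p q : ℝ} (hp : 0 < p)
    (hq : 0 < q) {a : ι → ℝ} {b : ℝ} (h : Tendsto a l (𝓝 b)) :
    Tendsto (fun n => |(|a n| ^ p - |a n - b| ^ p - |b| ^ p)| ^ q) l (𝓝 0) := by
  simpa [Function.comp_def, zero_rpow hp.ne', zero_rpow hq.ne'] using
    ((continuous_abs_rpow_sub_rpow_sub_rpow hp.le hq.le).tendsto (b, b)).comp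
      (h.prodMk_nhds tendsto_const_nhds)

section
variable {α : Type*} [MeasurableSpace α] {μ : Measure α}

theorem MeasureTheory.MemLp.integrable_abs_rpow {f : α → ℝ} {r : ℝ} (hr : 0 < r)
    (hf : MemLp f (ENNReal.ofReal r) μ) : Integrable (fun x => |f x| ^ r) μ := by
  simpa [ENNReal.toReal_ofReal hr.le] using
    hf.integrable_norm_rpow (by simpa using hr) ENNReal.ofReal_ne_top

theorem integral_abs_rpow_le_of_eLpNorm_le {f : α → ℝ} {r : ℝ} {K : ENNReal} (hr : 0 < r)
    (hK : K ≠ ⊤) (hf : MemLp f (ENNReal.ofReal r) μ) (h : eLpNorm f (ENNReal.ofReal r) μ ≤ K) :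
    ∫ x, |f x| ^ r ∂μ ≤ K.toReal ^ r := by
  rw [hf.eLpNorm_eq_integral_rpow_norm (by simpa using hr) ENNReal.ofReal_ne_top,
    ENNReal.ofReal_le_iff_le_toReal hK, ENNReal.toReal_ofReal hr.le,
    rpow_inv_le_iff_of_pos (integral_nonneg fun _ => by positivity) ENNReal.toReal_nonneg hr] at h
  simpa using h

theorem abs_max_sub_zero_le_abs {a b c : ℝ} (h : a ≤ b + c) : |max (a - b) 0| ≤ |c| := by
  rw [abs_of_nonneg (le_max_right _ _)]
  exact max_le (by linarith [le_abs_self c]) (abs_nonneg c)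

theorem tendsto_integral_max_sub_zero {f h : ℕ → α → ℝ} {G : α → ℝ}
    (hf : ∀ n, AEStronglyMeasurable (f n) μ) (hf0 : ∀ n x, 0 ≤ f n x)
    (hf_lim : ∀ᵐ x ∂μ, Tendsto (fun n => f n x) atTop (𝓝 0))
    (hh : ∀ n, AEStronglyMeasurable (h n) μ) (hh0 : ∀ n x, 0 ≤ h n x)
    (hG : Integrable G μ) (hfG : ∀ n x, f n x ≤ h n x + G x) :
    Tendsto (fun n => ∫ x, max (f n x - h n x) 0 ∂μ) atTop (𝓝 0) := by
  have hlim : ∀ᵐ x ∂μ, Tendsto (fun n => max (f n x - h n x) 0) atTop (𝓝 0) := by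
    filter_upwards [hf_lim] with x hx
    exact tendsto_of_tendsto_of_tendsto_of_le_of_le tendsto_const_nhds hx
      (fun n => le_max_right _ _) (fun n => max_le (by linarith [hh0 n x]) (hf0 n x))
  simpa using tendsto_integral_of_dominated_convergence _
    (fun n => ((hf n).sub (hh n)).sup aestronglyMeasurable_const) hG.abs
    (fun n => .of_forall fun x => abs_max_sub_zero_le_abs (hfG n x)) hlim

theorem tendsto_integral_of_le_mul_add {f h : ℕ → α → ℝ} {M : ℝ}
    (hf : ∀ n, AEStronglyMeasurable (f n) μ) (hf0 : ∀ n x, 0 ≤ f n x)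
    (hf_lim : ∀ᵐ x ∂μ, Tendsto (fun n => f n x) atTop (𝓝 0))
    (hh : ∀ n, Integrable (h n) μ) (hh0 : ∀ n x, 0 ≤ h n x) (hM : ∀ n, ∫ x, h n x ∂μ ≤ M)
    (hdom : ∀ ε > 0, ∃ G, Integrable G μ ∧ ∀ n x, f n x ≤ ε * h n x + G x) :
    Tendsto (fun n => ∫ x, f n x ∂μ) atTop (𝓝 0) := by
  refine tendsto_order.2 ⟨fun a ha => .of_forall fun n => ha.trans_le (integral_nonneg (hf0 n)),
    fun a ha => ?_⟩
  have hM0 : 0 ≤ M := (integral_nonneg (hh0 0)).trans (hM 0)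
  set ε := a / (2 * (M + 1))
  have hε : 0 < ε := by positivity
  obtain ⟨G, hG, hfG⟩ := hdom ε hε
  set g := fun n x => max (f n x - ε * h n x) 0
  have hg_lim : Tendsto (fun n => ∫ x, g n x ∂μ) atTop (𝓝 0) :=
    tendsto_integral_max_sub_zero hf hf0 hf_lim (fun n => ((hh n).const_mul ε).1)
      (fun n x => mul_nonneg hε.le (hh0 n x)) hG hfG
  have hg_int : ∀ n, Integrable (g n) μ := fun n =>
    hG.abs.mono' (((hf n).sub ((hh n).const_mul ε).1).sup aestronglyMeasurable_const)
      (.of_forall fun x => abs_max_sub_zero_le_abs (hfG n x))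
  filter_upwards [hg_lim.eventually (gt_mem_nhds (half_pos ha))] with n hn
  calc ∫ x, f n x ∂μ ≤ ∫ x, g n x + ε * h n x ∂μ :=
        integral_mono_of_nonneg (.of_forall (hf0 n)) ((hg_int n).add ((hh n).const_mul ε))
          (.of_forall fun x => by linarith [le_max_left (f n x - ε * h n x) 0])
    _ = ∫ x, g n x ∂μ + ε * ∫ x, h n x ∂μ := by
        rw [integral_add (hg_int n) ((hh n).const_mul ε), integral_const_mul]
    _ ≤ ∫ x, g n x ∂μ + ε * (M + 1) := by gcongr; linarith [hM n]
    _ < a / 2 + a / 2 := by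
        have : ε * (M + 1) = a / 2 := by simp only [ε]; field_simp
        linarith
    _ = a := add_halves a

end

theorem brezis_lieb (N : ℕ) (p r : ℝ) (hp : 1 ≤ p) (hpr : p ≤ r)
    (u : ℕ → (Fin N → ℝ) → ℝ) (u₀ : (Fin N → ℝ) → ℝ)
    (hmem : ∀ n, MemLp (u n) (ENNReal.ofReal r) volume)
    (hbdd : ∃ C : ℝ, ∀ n, eLpNorm (u n) (ENNReal.ofReal r) volume ≤ ENNReal.ofReal C)
    (hae : ∀ᵐ x ∂(volume : Measure (Fin N → ℝ)),
      Tendsto (fun n => u n x) atTop (𝓝 (u₀ x))) :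
    Tendsto (fun n => ∫ x : Fin N → ℝ,
        (|(|u n x| ^ p) - (|u n x - u₀ x| ^ p) - (|u₀ x| ^ p)|) ^ (r / p))
      atTop (𝓝 0) := by
  obtain ⟨C, hC⟩ := hbdd
  have hp0 : 0 < p := by linarith
  have hr0 : 0 < r := hp0.trans_le hpr
  have hu₀_bdd : eLpNorm u₀ (ENNReal.ofReal r) volume ≤ ENNReal.ofReal C :=
    Lp.eLpNorm_le_of_ae_tendsto (.of_forall hC) (fun n => (hmem n).1) hae
  have hu₀ : MemLp u₀ (ENNReal.ofReal r) volume :=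
    ⟨aestronglyMeasurable_of_tendsto_ae _ (fun n => (hmem n).1) hae,
      hu₀_bdd.trans_lt ENNReal.ofReal_lt_top⟩
  have hv_bdd : ∀ n, eLpNorm (u n - u₀) (ENNReal.ofReal r) volume
      ≤ ENNReal.ofReal C + ENNReal.ofReal C := fun n =>
    (eLpNorm_sub_le (hmem n).1 hu₀.1 (ENNReal.one_le_ofReal.2 (hp.trans hpr))).trans
      (add_le_add (hC n) hu₀_bdd)
  have hq : 0 < r / p := div_pos hr0 hp0
  refine tendsto_integral_of_le_mul_add
    (f := fun n x => |(|u n x| ^ p - |u n x - u₀ x| ^ p - |u₀ x| ^ p)| ^ (r / p))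
    (h := fun n x => |u n x - u₀ x| ^ r) (M := (ENNReal.ofReal C + ENNReal.ofReal C).toReal ^ r)
    (fun n => ?_) (fun n x => by positivity)
    (hae.mono fun x hx => tendsto_abs_rpow_sub_rpow_sub_rpow_zero hp0 hq hx)
    (fun n => ((hmem n).sub hu₀).integrable_abs_rpow hr0) (fun n x => by positivity)
    (fun n => integral_abs_rpow_le_of_eLpNorm_le hr0 (by finiteness) ((hmem n).sub hu₀) (hv_bdd n))
    fun ε hε => ?_
  · exact (continuous_abs_rpow_sub_rpow_sub_rpow hp0.le hq.le).comp_aestronglyMeasurable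
      (f := fun x => (u n x, u₀ x)) ((hmem n).1.prodMk hu₀.1)
  · obtain ⟨K, hK⟩ := exists_abs_rpow_sub_rpow_sub_rpow_rpow_div_le hp hpr hε
    exact ⟨fun x => K * |u₀ x| ^ r, (hu₀.integrable_abs_rpow hr0).const_mul K,
      fun n x => hK (u n x) (u₀ x)⟩
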